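/- arXiv:1311.5806 — 4 statements merged into one kernel-verified Lean document; each statement's English description precedes it below -/
import Mathlib

section
/- Suppose (P_k^{(j)})_{k≥0, 1≤j≤M} satisfies P_0^{(j)} = 1, P_k^{(j)} is nonincreasing in k with limit 0, and the recursion P_{l+1}^{(j)} − P_{l+2}^{(j)} = ν_j (P_l^{(j)} − P_{l+1}^{(j)}) Σ_{i=1}^M γ_i (P_l^{(i)} + P_{l+1}^{(i)}) for all l ≥ 0 and all j. Then for every k ≥ 0, Σ_{j=1}^M (γ_j/ν_j) P_{k+1}^{(j)} = (Σ_{j=1}^M γ_j P_k^{(j)})^2. -/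
/-!
The quantity `F k = ∑ j, γ j / ν j * P j (k + 1) - (∑ j, γ j * P j k) ^ 2` is constant in `k`:
dividing the recursion by `ν j` and summing against `γ` turns its right-hand side into
`(B l - B (l + 1)) * (B l + B (l + 1))` with `B l = ∑ i, γ i * P i l`, a difference of squares.
Since every `P j k → 0`, also `F k → 0`, so `F` vanishes identically.
-/

open Finset Filter Topology

theorem eq_of_tendsto_of_succ_eq {X : Type*} [TopologicalSpace X] [T2Space X] {f : ℕ → X}
    {a : X} (hf : ∀ n, f (n + 1) = f n) (h : Tendsto f atTop (𝓝 a)) (n : ℕ) : f n = a := by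
  have hconst : ∀ m ≥ n, f m = f n := fun m hm => by
    induction m, hm using Nat.le_induction with
    | base => rfl
    | succ m _ ih => rw [hf, ih]
  exact tendsto_nhds_unique
    (tendsto_const_nhds.congr' (eventually_atTop.2 ⟨n, fun m hm => (hconst m hm).symm⟩)) h

theorem sum_div_mul_sub_sum_div_mul_eq_sq_sub_sq {ι K : Type*} [Fintype ι] [Field K]
    (γ ν x y z w : ι → K) (hν : ∀ j, ν j ≠ 0)
    (h : ∀ j, z j - w j = ν j * (x j - y j) * ∑ i, γ i * (x i + y i)) :
    ∑ j, γ j / ν j * z j - ∑ j, γ j / ν j * w j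
      = (∑ j, γ j * x j) ^ 2 - (∑ j, γ j * y j) ^ 2 := by
  have hterm : ∀ j, γ j / ν j * z j - γ j / ν j * w j
      = γ j * (x j - y j) * ∑ i, γ i * (x i + y i) := fun j => by
    rw [← mul_sub, h j]
    field_simp [hν j]
  rw [← sum_sub_distrib, sum_congr rfl fun j _ => hterm j, ← sum_mul]
  simp only [mul_sub, mul_add, sum_sub_distrib, sum_add_distrib]
  ring

theorem tendsto_sum_mul_of_tendsto_zero {ι : Type*} [Fintype ι] (c : ι → ℝ) {P : ι → ℕ → ℝ}
    (h : ∀ j, Tendsto (P j) atTop (𝓝 0)) :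
    Tendsto (fun k => ∑ j, c j * P j k) atTop (𝓝 0) := by
  simpa using tendsto_finsetSum univ fun j _ => (h j).const_mul (c j)

theorem stmt_5_general (M : ℕ) (γ ν : Fin M → ℝ)
    (hν : ∀ j, 0 < ν j)
    (P : Fin M → ℕ → ℝ)
    (hPlim : ∀ j, Filter.Tendsto (fun k => P j k) Filter.atTop (nhds 0))
    (hrec : ∀ l j, P j (l + 1) - P j (l + 2) =
      ν j * (P j l - P j (l + 1)) * ∑ i, γ i * (P i l + P i (l + 1))) :
    ∀ k, ∑ j, γ j / ν j * P j (k + 1) = (∑ j, γ j * P j k) ^ 2 := by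
  set F : ℕ → ℝ := fun k => ∑ j, γ j / ν j * P j (k + 1) - (∑ j, γ j * P j k) ^ 2
  have hstep : ∀ l, F (l + 1) = F l := fun l => by
    have := sum_div_mul_sub_sum_div_mul_eq_sq_sub_sq γ ν (P · l) (P · (l + 1)) (P · (l + 1))
      (P · (l + 2)) (fun j => (hν j).ne') (hrec l)
    simp only [F]
    linarith
  have hlim : Tendsto F atTop (𝓝 0) := by
    simpa using ((tendsto_sum_mul_of_tendsto_zero (γ / ν) hPlim).comp
      (tendsto_add_atTop_nat 1)).sub ((tendsto_sum_mul_of_tendsto_zero γ hPlim).pow 2)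
  exact fun k => sub_eq_zero.1 (eq_of_tendsto_of_succ_eq hstep hlim k)

theorem stmt_5 (M : ℕ) (hM : 1 ≤ M) (γ ν : Fin M → ℝ)
    (hγ : ∀ j, 0 < γ j) (hγsum : ∑ j, γ j = 1) (hν : ∀ j, 0 < ν j)
    (P : Fin M → ℕ → ℝ)
    (hP0 : ∀ j, P j 0 = 1)
    (hPnonneg : ∀ j k, 0 ≤ P j k)
    (hPle1 : ∀ j k, P j k ≤ 1)
    (hPmono : ∀ j k, P j (k + 1) ≤ P j k)
    (hPlim : ∀ j, Filter.Tendsto (fun k => P j k) Filter.atTop (nhds 0))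
    (hrec : ∀ l j, P j (l + 1) - P j (l + 2) =
      ν j * (P j l - P j (l + 1)) * ∑ i, γ i * (P i l + P i (l + 1))) :
    ∀ k, ∑ j, γ j / ν j * P j (k + 1) = (∑ j, γ j * P j k) ^ 2 :=
  stmt_5_general M γ ν hν P hPlim hrec
end

section
/- Let M = 2, with γ_1, γ_2 > 0, γ_1 + γ_2 = 1, ν_1, ν_2 > 0 satisfying the stability conditions γ_1 ν_1 < 1, γ_2 ν_2 < 1, and ν_1 ν_2 (γ_1+γ_2)^2 < ν_1 γ_2 + ν_2 γ_1 (equivalently γ_1/ν_1 + γ_2/ν_2 > 1). If ζ_1, ζ_2 ∈ [0,1] satisfy (γ_1/ν_1)ζ_1 + (γ_2/ν_2)ζ_2 = (γ_1 ζ_1 + γ_2 ζ_2)^2, then ζ_1 = ζ_2 = 0. -/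
theorem stmt_8 (γ1 γ2 ν1 ν2 : ℝ) (hγ1 : 0 < γ1) (hγ2 : 0 < γ2)
    (hγsum : γ1 + γ2 = 1) (hν1 : 0 < ν1) (hν2 : 0 < ν2)
    (hstab1 : γ1 / ν1 > γ1 ^ 2) (hstab2 : γ2 / ν2 > γ2 ^ 2)
    (hstab12 : γ1 / ν1 + γ2 / ν2 > 1)
    (ζ1 ζ2 : ℝ) (hζ1 : ζ1 ∈ Set.Icc (0 : ℝ) 1) (hζ2 : ζ2 ∈ Set.Icc (0 : ℝ) 1)
    (heq : γ1 / ν1 * ζ1 + γ2 / ν2 * ζ2 = (γ1 * ζ1 + γ2 * ζ2) ^ 2) :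
    ζ1 = 0 ∧ ζ2 = 0 := by
  obtain ⟨h10, h11⟩ := hζ1
  obtain ⟨h20, h21⟩ := hζ2
  set a := γ1 / ν1 with ha
  set b := γ2 / ν2 with hb
  have hid : (1-ζ2)*ζ1*(a-γ1^2) + (1-ζ2)*(γ1^2*ζ1*(1-ζ1)) + ζ2*((1-ζ1)*(b-γ2^2))
      + ζ2*(ζ1*(a+b-1)) + ζ2*(γ1^2*ζ1*(1-ζ1)) + γ2^2*ζ2*(1-ζ2) = 0 := by
    have h1 : γ2 = 1 - γ1 := by linarith
    rw [h1] at heq ⊢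
    nlinarith [heq, sq_nonneg (γ1*ζ1 + (1-γ1)*ζ2)]
  have h2 : ζ2 = 0 := by
    by_contra h
    have hz2 : 0 < ζ2 := lt_of_le_of_ne h20 (Ne.symm h)
    have hbr : 0 < (1-ζ1)*(b-γ2^2) + ζ1*(a+b-1) := by
      nlinarith [mul_nonneg (by linarith : (0:ℝ) ≤ 1-ζ1) (by linarith : (0:ℝ) ≤ b - γ2^2),
        mul_nonneg h10 (by linarith : (0:ℝ) ≤ a + b - 1)]
    nlinarith [mul_pos hz2 hbr,
      mul_nonneg (mul_nonneg (by linarith : (0:ℝ) ≤ 1-ζ2) h10) (by linarith : (0:ℝ) ≤ a - γ1^2),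
      mul_nonneg (by linarith : (0:ℝ) ≤ 1-ζ2) (mul_nonneg (mul_nonneg (sq_nonneg γ1) h10) (by linarith : (0:ℝ) ≤ 1-ζ1)),
      mul_nonneg h20 (mul_nonneg (mul_nonneg (sq_nonneg γ1) h10) (by linarith : (0:ℝ) ≤ 1-ζ1)),
      mul_nonneg (mul_nonneg (sq_nonneg γ2) h20) (by linarith : (0:ℝ) ≤ 1-ζ2)]
  have h1 : ζ1 = 0 := by
    apply le_antisymm _ h10
    rw [h2] at hid
    nlinarith [mul_nonneg (mul_nonneg (sq_nonneg γ1) h10) (by linarith : (0:ℝ) ≤ 1-ζ1),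
      mul_nonneg h10 (by linarith : (0:ℝ) ≤ a - γ1^2)]
  exact ⟨h1, h2⟩
end

section
/- Let k ≤ l be positive integers and for each n define Λ_n = {λ > 0 : for every subset B of {1,...,nN*} with |B| ≥ 2, (λ/μ)·(|B|·(|B|−1))/((Σ_{i∈B} C_{(i)})·(nN*−1)) < 1}, where the multiset of capacities among the first nN* servers contains exactly nN*γ_j servers of capacity C_j. Then Λ_l ⊆ Λ_k. -/
/-!
Write `b = #B` and `S = ∑ i ∈ B, cap i` for `B ⊆ range (k * N*)`, and let `r = l / k`. Taking `r`
times as many servers of each capacity as `B` has is a fractional selection from the pool of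
`l * N*` servers (the pools have proportional capacity profiles), and for it the cross-multiplied
comparison `b (b - 1) (l N* - 1) S' ≤ b' (b' - 1) (k N* - 1) S` holds with slack
`r b S (r - 1) (k N* - b) ≥ 0`. Its defect is a convex function of the per-capacity counts, so it
stays nonnegative at some vertex of the box between the counts of `B` and the full class sizes of the
larger pool; such a vertex is the count vector of an actual subset `B'`.
-/

open Finset Function

theorem ConvexOn.exists_ge_of_mem_box {ι : Type*} [DecidableEq ι] {f : (ι → ℝ) → ℝ}
    (hf : ConvexOn ℝ Set.univ f) (lo hi : ι → ℝ) (s : Finset ι) {x : ι → ℝ}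
    (hx : ∀ i ∈ s, x i ∈ Set.Icc (lo i) (hi i)) :
    ∃ y : ι → ℝ, (∀ i ∈ s, y i = lo i ∨ y i = hi i) ∧ (∀ i ∉ s, y i = x i) ∧ f x ≤ f y := by
  induction s using Finset.induction_on generalizing x with
  | empty => exact ⟨x, by simp, fun _ _ => rfl, le_rfl⟩
  | @insert a s ha ih =>
    have hxa := hx a (mem_insert_self a s)
    have hseg : x ∈ segment ℝ (update x a (lo a)) (update x a (hi a)) := by
      rw [← Pi.image_update_segment, segment_eq_Icc (hxa.1.trans hxa.2)]
      exact ⟨x a, hxa, update_eq_self a x⟩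
    obtain ⟨t, ht, hxt⟩ : ∃ t, (t = lo a ∨ t = hi a) ∧ f x ≤ f (update x a t) := by
      rcases le_max_iff.mp (hf.le_max_of_mem_segment trivial trivial hseg) with h | h
      exacts [⟨_, .inl rfl, h⟩, ⟨_, .inr rfl, h⟩]
    have hne : ∀ i ∈ s, i ≠ a := fun i hi h => ha (h ▸ hi)
    obtain ⟨y, hys, hyx, hy⟩ := ih (x := update x a t) fun i hi => by
      rw [update_of_ne (hne i hi)]
      exact hx i (mem_insert_of_mem hi)
    refine ⟨y, fun i hi => ?_, fun i hi => ?_, hxt.trans hy⟩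
    · rcases mem_insert.mp hi with rfl | hi
      · rwa [hyx i ha, update_self]
      · exact hys i hi
    · obtain ⟨hia, his⟩ : i ≠ a ∧ i ∉ s := by simpa using hi
      rw [hyx i his, update_of_ne hia]

theorem convexOn_sum_mul_sum_sub_one {ι : Type*} (s : Finset ι) (w : ι → ℝ) {α : ℝ} (hα : 0 ≤ α)
    (β : ℝ) :
    ConvexOn ℝ Set.univ fun x : ι → ℝ =>
      α * ((∑ i ∈ s, x i) * (∑ i ∈ s, x i - 1)) - β * ∑ i ∈ s, x i * w i := by
  refine ⟨convex_univ, fun x _ y _ a b ha hb hab => ?_⟩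
  simp only [Pi.add_apply, Pi.smul_apply, smul_eq_mul, add_mul, mul_assoc, sum_add_distrib,
    ← mul_sum]
  obtain rfl : b = 1 - a := by linarith
  nlinarith [mul_nonneg (mul_nonneg ha hb) (mul_nonneg hα (sq_nonneg (∑ i ∈ s, x i - ∑ i ∈ s, y i)))]

theorem Finset.exists_subset_card_eq_sum_fiber {α M : Type*} [DecidableEq α] [DecidableEq M]
    [AddCommMonoid M] {Q : Finset α} {f : α → M} {t : Finset M} {n : M → ℕ}
    (hn : ∀ y ∈ t, n y ≤ #{x ∈ Q | f x = y}) :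
    ∃ B ⊆ Q, #B = ∑ y ∈ t, n y ∧ ∑ x ∈ B, f x = ∑ y ∈ t, n y • y := by
  choose! F hFQ hFcard using fun y hy => exists_subset_card_eq (hn y hy)
  have hF : ∀ y ∈ t, ∀ x ∈ F y, x ∈ Q ∧ f x = y := fun y hy x hx => mem_filter.mp (hFQ y hy hx)
  have hdisj : (t : Set M).PairwiseDisjoint F := fun y hy z hz hyz =>
    disjoint_left.mpr fun x hxy hxz => hyz ((hF y hy x hxy).2.symm.trans (hF z hz x hxz).2)
  refine ⟨t.biUnion F, fun x hx => ?_, ?_, ?_⟩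
  · obtain ⟨y, hy, hxy⟩ := mem_biUnion.mp hx
    exact (hF y hy x hxy).1
  · rw [card_biUnion hdisj]
    exact sum_congr rfl hFcard
  · rw [sum_biUnion hdisj]
    refine sum_congr rfl fun y hy => ?_
    rw [sum_congr rfl fun x hx => (hF y hy x hx).2, sum_const, hFcard y hy]

theorem pair_ratio_le_scaled {b S p q : ℝ} (hb : 0 ≤ b) (hbp : b ≤ p) (hS : 0 ≤ S) (hp : 0 < p)
    (hpq : p ≤ q) :
    b * (b - 1) * (q - 1) * (q / p * S) ≤ (p - 1) * S * (q / p * b * (q / p * b - 1)) := by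
  have key : (p - 1) * S * (q / p * b * (q / p * b - 1)) - b * (b - 1) * (q - 1) * (q / p * S) =
      q * b * S * (q - p) * (p - b) / p ^ 2 := by
    field_simp
    ring
  have hq : 0 ≤ q := hp.le.trans hpq
  have : 0 ≤ q * b * S * (q - p) * (p - b) / p ^ 2 :=
    div_nonneg (mul_nonneg (mul_nonneg (by positivity) (by linarith)) (by linarith)) (sq_nonneg p)
  linarith

theorem exists_between_pair_ratio_le {ι : Type*} [DecidableEq ι] {s : Finset ι} {w : ι → ℝ}
    (hw : ∀ i ∈ s, 0 ≤ w i) {m c : ι → ℕ} {p q : ℕ} (hp : 0 < p) (hpq : p ≤ q)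
    (hmc : ∀ i ∈ s, q * m i ≤ p * c i) (hmp : ∑ i ∈ s, m i ≤ p) :
    ∃ n : ι → ℕ, (∀ i ∈ s, m i ≤ n i ∧ n i ≤ c i) ∧
      (∑ i ∈ s, (m i : ℝ)) * (∑ i ∈ s, (m i : ℝ) - 1) * (q - 1) * ∑ i ∈ s, n i * w i ≤
        (p - 1) * (∑ i ∈ s, m i * w i) * ((∑ i ∈ s, (n i : ℝ)) * (∑ i ∈ s, (n i : ℝ) - 1)) := by
  set b : ℝ := ∑ i ∈ s, (m i : ℝ)
  set S : ℝ := ∑ i ∈ s, m i * w i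
  have hpR : (0 : ℝ) < p := by exact_mod_cast hp
  have hpqR : (p : ℝ) ≤ q := by exact_mod_cast hpq
  have hS : 0 ≤ S := sum_nonneg fun i hi => mul_nonneg (Nat.cast_nonneg _) (hw i hi)
  have hα : 0 ≤ (p - 1 : ℝ) * S := mul_nonneg (by linarith [(Nat.one_le_cast (α := ℝ)).mpr hp]) hS
  have hconv := convexOn_sum_mul_sum_sub_one s w hα (b * (b - 1) * (q - 1))
  set x : ι → ℝ := fun i => q / p * m i
  have hbox : ∀ i ∈ s, x i ∈ Set.Icc (m i : ℝ) (c i) := fun i hi => by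
    refine ⟨le_mul_of_one_le_left (Nat.cast_nonneg _) ((one_le_div hpR).mpr hpqR), ?_⟩
    show q / p * (m i : ℝ) ≤ c i
    rw [div_mul_eq_mul_div, div_le_iff₀ hpR, mul_comm (c i : ℝ)]
    exact_mod_cast hmc i hi
  have hx : 0 ≤ (p - 1 : ℝ) * S * ((∑ i ∈ s, x i) * (∑ i ∈ s, x i - 1)) -
      b * (b - 1) * (q - 1) * ∑ i ∈ s, x i * w i := by
    have hb : b ≤ p := by simpa only [b, Nat.cast_sum] using (Nat.cast_le (α := ℝ)).mpr hmp
    rw [← mul_sum, show ∑ i ∈ s, x i * w i = q / p * S by simp only [x, S, mul_assoc, ← mul_sum]]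
    exact sub_nonneg.mpr (pair_ratio_le_scaled (sum_nonneg fun i _ => Nat.cast_nonneg _) hb hS
      hpR hpqR)
  obtain ⟨y, hy, -, hxy⟩ := hconv.exists_ge_of_mem_box _ _ s hbox
  have hmc' : ∀ i ∈ s, m i ≤ c i := fun i hi =>
    Nat.le_of_mul_le_mul_left ((Nat.mul_le_mul_right _ hpq).trans (hmc i hi)) hp
  have : ∀ i ∈ s, ∃ k : ℕ, (k : ℝ) = y i ∧ m i ≤ k ∧ k ≤ c i := fun i hi => by
    rcases hy i hi with h | h
    exacts [⟨m i, h.symm, le_rfl, hmc' i hi⟩, ⟨c i, h.symm, hmc' i hi, le_rfl⟩]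
  choose! n hny hmn hnc using this
  refine ⟨n, fun i hi => ⟨hmn i hi, hnc i hi⟩, ?_⟩
  have hsum : ∑ i ∈ s, y i = ∑ i ∈ s, (n i : ℝ) := sum_congr rfl fun i hi => (hny i hi).symm
  have hwsum : ∑ i ∈ s, y i * w i = ∑ i ∈ s, (n i : ℝ) * w i :=
    sum_congr rfl fun i hi => by rw [hny i hi]
  simp only [hsum, hwsum] at hxy
  linarith

noncomputable def loadFactor {α : Type*} (cap : α → ℝ) (p : ℕ) (B : Finset α) : ℝ :=
  (#B : ℝ) * ((#B : ℝ) - 1) / ((∑ i ∈ B, cap i) * ((p : ℝ) - 1))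

theorem exists_subset_loadFactor_le {α : Type*} [DecidableEq α] {cap : α → ℝ}
    (hcap : ∀ i, 0 < cap i) {P Q : Finset α} (hPQ : #P ≤ #Q)
    (hPQ_fiber : ∀ v, #Q * #{i ∈ P | cap i = v} = #P * #{i ∈ Q | cap i = v})
    {B : Finset α} (hB : B ⊆ P) (hB2 : 2 ≤ #B) :
    ∃ B' ⊆ Q, 2 ≤ #B' ∧ loadFactor cap #P B ≤ loadFactor cap #Q B' := by
  set m : ℝ → ℕ := fun v => #{i ∈ B | cap i = v}
  have hcard : #B = ∑ v ∈ B.image cap, m v := card_eq_sum_card_image cap B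
  have hsum : ∑ i ∈ B, cap i = ∑ v ∈ B.image cap, (m v : ℝ) * v := by
    simpa only [id, nsmul_eq_mul] using sum_comp id cap (s := B)
  have hBP : #B ≤ #P := card_le_card hB
  obtain ⟨n, hn, hineq⟩ := exists_between_pair_ratio_le (s := B.image cap) (w := id)
    (c := fun v => #{i ∈ Q | cap i = v}) (by simp [(hcap _).le]) (by omega) hPQ
    (fun v _ => hPQ_fiber v ▸ Nat.mul_le_mul_left _ (card_le_card (filter_subset_filter _ hB)))
    (hcard ▸ hBP)
  obtain ⟨B', hB'Q, hcard', hsum'⟩ := exists_subset_card_eq_sum_fiber fun v hv => (hn v hv).2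
  have hB'2 : 2 ≤ #B' := hcard' ▸ hB2.trans (hcard ▸ sum_le_sum fun v hv => (hn v hv).1)
  refine ⟨B', hB'Q, hB'2, ?_⟩
  have hS : 0 < ∑ i ∈ B, cap i := sum_pos (fun i _ => hcap i) (card_pos.mp (by omega))
  have hS' : 0 < ∑ i ∈ B', cap i := sum_pos (fun i _ => hcap i) (card_pos.mp (by omega))
  have hp : (1 : ℝ) < #P := by exact_mod_cast (by omega : 1 < #P)
  have hq : (1 : ℝ) < #Q := by exact_mod_cast (by omega : 1 < #Q)
  rw [loadFactor, loadFactor, div_le_div_iff₀ (by nlinarith) (by nlinarith)]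
  simp only [hsum, hsum', hcard, hcard', Nat.cast_sum, nsmul_eq_mul, id] at hineq ⊢
  linear_combination hineq

theorem card_filter_range_mul_eq {M N : ℕ} {C γ : Fin M → ℝ} {cap : ℕ → ℝ}
    (hcapval : ∀ i, ∃ j, cap i = C j)
    (hprop : ∀ (n : ℕ) (j : Fin M),
      (#{i ∈ range (n * N) | cap i = C j} : ℝ) = n * N * γ j) (n : ℕ) (v : ℝ) :
    #{i ∈ range (n * N) | cap i = v} = n * #{i ∈ range N | cap i = v} := by
  by_cases hv : ∃ j, v = C j
  · obtain ⟨j, rfl⟩ := hv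
    have h1 := hprop 1 j
    rw [one_mul, Nat.cast_one, one_mul] at h1
    have : (#{i ∈ range (n * N) | cap i = C j} : ℝ) = n * #{i ∈ range N | cap i = C j} := by
      rw [hprop n j, h1, mul_assoc]
    exact_mod_cast this
  · push Not at hv
    have hempty : ∀ t : Finset ℕ, #{i ∈ t | cap i = v} = 0 := fun t =>
      card_eq_zero.mpr <| filter_false_of_mem fun i _ h => by
        obtain ⟨j, hj⟩ := hcapval i
        exact hv j (h ▸ hj)
    rw [hempty, hempty, mul_zero]

theorem stmt_17_general (μ : ℝ) (hμ : 0 < μ) (M : ℕ)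
    (C γ : Fin M → ℝ) (hC : ∀ j, 0 < C j)
    (Nstar : ℕ)
    (cap : ℕ → ℝ)
    (hcapval : ∀ i, ∃ j : Fin M, cap i = C j)
    (hprop : ∀ (n : ℕ) (j : Fin M),
      (((Finset.range (n * Nstar)).filter (fun i => cap i = C j)).card : ℝ) =
        (n : ℝ) * (Nstar : ℝ) * γ j)
    (Λ : ℕ → Set ℝ)
    (hΛ : ∀ n, Λ n = {lam : ℝ | 0 < lam ∧
      ∀ B : Finset ℕ, B ⊆ Finset.range (n * Nstar) → 2 ≤ B.card →
        lam / μ * ((B.card : ℝ) * ((B.card : ℝ) - 1)) /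
            ((∑ i ∈ B, cap i) * ((n * Nstar : ℕ) - 1 : ℝ)) < 1})
    (k l : ℕ) (hkl : k ≤ l) :
    Λ l ⊆ Λ k := by
  have hcap : ∀ i, 0 < cap i := fun i => (hcapval i).elim fun j hj => hj ▸ hC j
  have hfiber := card_filter_range_mul_eq hcapval hprop
  intro lam hlam
  rw [hΛ] at hlam ⊢
  obtain ⟨hlam, hlamB⟩ := hlam
  refine ⟨hlam, fun B hB hB2 => ?_⟩
  obtain ⟨B', hB', hB'2, hle⟩ := exists_subset_loadFactor_le (Q := range (l * Nstar)) hcap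
    (by simpa using Nat.mul_le_mul_right Nstar hkl)
    (fun v => by simp only [card_range, hfiber]; ring) hB hB2
  have hlt := hlamB B' hB' hB'2
  simp only [loadFactor, card_range] at hle
  rw [mul_div_assoc] at hlt ⊢
  exact (mul_le_mul_of_nonneg_left hle (div_pos hlam hμ).le).trans_lt hlt

theorem stmt_17 (μ : ℝ) (hμ : 0 < μ) (M : ℕ) (hM : 1 ≤ M)
    (C γ : Fin M → ℝ) (hC : ∀ j, 0 < C j)
    (hγ0 : ∀ j, 0 < γ j) (hγ1 : ∀ j, γ j ≤ 1) (hγsum : ∑ j, γ j = 1)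
    (Nstar : ℕ) (hNstar : 2 < Nstar)
    (cap : ℕ → ℝ)
    (hcapval : ∀ i, ∃ j : Fin M, cap i = C j)
    (hprop : ∀ (n : ℕ) (j : Fin M),
      (((Finset.range (n * Nstar)).filter (fun i => cap i = C j)).card : ℝ) =
        (n : ℝ) * (Nstar : ℝ) * γ j)
    (Λ : ℕ → Set ℝ)
    (hΛ : ∀ n, Λ n = {lam : ℝ | 0 < lam ∧
      ∀ B : Finset ℕ, B ⊆ Finset.range (n * Nstar) → 2 ≤ B.card →
        lam / μ * ((B.card : ℝ) * ((B.card : ℝ) - 1)) /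
            ((∑ i ∈ B, cap i) * ((n * Nstar : ℕ) - 1 : ℝ)) < 1})
    (k l : ℕ) (hk : 0 < k) (hkl : k ≤ l) :
    Λ l ⊆ Λ k :=
  stmt_17_general μ hμ M C γ hC Nstar cap hcapval hprop Λ hΛ k l hkl
end

section
/- Given the recursion P_{l+2}^{(j)} = P_{l+1}^{(j)} − ν_j (P_l^{(j)} − P_{l+1}^{(j)})·Σ_{i=1}^{M} γ_i (P_l^{(i)} + P_{l+1}^{(i)}) for l ≥ 0, j ∈ {1,...,M}, together with the initial identity Σ_j (γ_j/ν_j) P_1^{(j)} = (Σ_j γ_j P_0^{(j)})^2, it follows by induction that Σ_j (γ_j/ν_j) P_{l+1}^{(j)} = (Σ_j γ_j P_l^{(j)})^2 holds for all l ≥ 0. -/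
open Finset

theorem stmt_19 (M : ℕ) (hM : 1 ≤ M) (γ ν : Fin M → ℝ)
    (hγ : ∀ j, 0 < γ j) (hν : ∀ j, 0 < ν j)
    (P : Fin M → ℕ → ℝ)
    (hrec : ∀ (l : ℕ) (j : Fin M), P j (l + 2) = P j (l + 1) -
      ν j * (P j l - P j (l + 1)) * ∑ i, γ i * (P i l + P i (l + 1)))
    (hbase : ∑ j, γ j / ν j * P j 1 = (∑ j, γ j * P j 0) ^ 2) :
    ∀ l : ℕ, ∑ j, γ j / ν j * P j (l + 1) = (∑ j, γ j * P j l) ^ 2 := by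
  intro l
  induction l with
  | zero => exact hbase
  | succ l ih =>
    set A := ∑ j, γ j * P j l with hA
    set B := ∑ j, γ j * P j (l + 1) with hB
    have h1 : (A - B) = ∑ i, γ i * (P i l - P i (l + 1)) := by
      rw [hA, hB, ← Finset.sum_sub_distrib]
      exact Finset.sum_congr rfl fun i _ => (mul_sub _ _ _).symm
    have h2 : (A + B) = ∑ i, γ i * (P i l + P i (l + 1)) := by
      rw [hA, hB, ← Finset.sum_add_distrib]
      exact Finset.sum_congr rfl fun i _ => (mul_add _ _ _).symm
    have key : ∑ j, γ j / ν j * P j (l + 2)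
        = (∑ j, γ j / ν j * P j (l + 1)) - (A - B) * (A + B) := by
      simp only [hrec l]
      rw [h1, ← h2, Finset.sum_mul, ← Finset.sum_sub_distrib]
      apply Finset.sum_congr rfl
      intro j _
      have hνj := (hν j).ne'
      field_simp
    rw [key, ih]
    ring
end
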